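/- Let Σ be a real symmetric positive definite 2n×2n matrix, ħ > 0, and set M = (ħ/2)Σ⁻¹. Then Σ + (iħ/2)J_n is positive semidefinite if and only if every complex eigenvalue of J_n·M has modulus ≤ 1 (i.e., all symplectic eigenvalues of M are ≤ 1). -/

import Mathlib

open Matrix
open scoped ComplexOrder

noncomputable section

/-- The phase space index type for `ℝ^{2m}`, split as positions ⊕ momenta. -/
abbrev PS (m : ℕ) := Fin m ⊕ Fin m

/-- The standard symplectic matrix `J_m = [[0, I_m], [-I_m, 0]]`. -/
def symplJ (m : ℕ) : Matrix (PS m) (PS m) ℝ := Matrix.fromBlocks 0 1 (-1) 0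

/-- `S ∈ Sp(m)`: `Sᵀ J_m S = J_m`. -/
def IsSymplectic {m : ℕ} (S : Matrix (PS m) (PS m) ℝ) : Prop :=
  Sᵀ * symplJ m * S = symplJ m

/-- The quantum condition `Σ + (i·hbar/2) J_m ≥ 0`, i.e. the complex Hermitian matrix
`Σ + (i·hbar/2) J_m` is positive semidefinite. -/
def QuantumCond (m : ℕ) (hbar : ℝ) (Sig : Matrix (PS m) (PS m) ℝ) : Prop :=
  (Sig.map Complex.ofReal + (hbar / 2 : ℝ) • Complex.I • (symplJ m).map Complex.ofReal).PosSemidef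

/-- `μ ∈ ℂ` is an eigenvalue of the real matrix `N` (viewed as a complex matrix). -/
def IsEigenvalue {ι : Type} [Fintype ι] [DecidableEq ι] (N : Matrix ι ι ℝ) (μ : ℂ) : Prop :=
  (N.map Complex.ofReal - μ • 1).det = 0


section Aux

variable {ι : Type} [Fintype ι] [DecidableEq ι]

lemma det_sub_smul_one_eq_prod {A : Matrix ι ι ℂ} (hA : A.IsHermitian) (z : ℂ) :
    (A - z • 1).det = ∏ i, ((hA.eigenvalues i : ℂ) - z) := by
  set U : Matrix ι ι ℂ := (hA.eigenvectorUnitary : Matrix ι ι ℂ) with hUdef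
  have hU : U * star U = 1 := (Matrix.mem_unitaryGroup_iff).mp hA.eigenvectorUnitary.2
  set D : Matrix ι ι ℂ := diagonal (RCLike.ofReal ∘ hA.eigenvalues) with hDdef
  have h1 : U * (D - z • 1) * star U = A - z • 1 := by
    rw [Matrix.mul_sub, Matrix.sub_mul, Matrix.mul_smul, mul_one, Matrix.smul_mul, hU]
    conv_rhs => rw [hA.spectral_theorem]
    rfl
  have hdetU : U.det * (star U).det = 1 := by rw [← det_mul, hU, det_one]
  have h2 : (A - z • 1).det = (D - z • 1).det := by
    rw [← h1, det_mul, det_mul]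
    calc U.det * (D - z•1).det * (star U).det
        = (D - z•1).det * (U.det * (star U).det) := by ring
      _ = (D - z•1).det := by rw [hdetU, mul_one]
  rw [h2, hDdef, smul_one_eq_diagonal, diagonal_sub, det_diagonal]
  rfl

lemma herm_eigen_det_zero {A : Matrix ι ι ℂ} (hA : A.IsHermitian) (i : ι) :
    (A - (hA.eigenvalues i : ℂ) • 1).det = 0 := by
  rw [det_sub_smul_one_eq_prod hA]
  exact Finset.prod_eq_zero (Finset.mem_univ i) (by simp)

lemma key_lemma {A : Matrix ι ι ℂ} (hA : A.IsHermitian) (hAT : Aᵀ = -A) :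
    (1 + A).PosSemidef ↔ ∀ ν : ℂ, (A - ν • 1).det = 0 → ‖ν‖ ≤ 1 := by
  have pair : ∀ ν : ℂ, (A - ν • 1).det = 0 → (A - (-ν) • 1).det = 0 := by
    intro ν h
    have e : (A - (-ν) • 1) = -(A - ν • 1)ᵀ := by
      rw [transpose_sub, hAT, transpose_smul, transpose_one, neg_sub, neg_smul, sub_neg_eq_add]
      abel
    rw [e, det_neg, det_transpose, h, mul_zero]
  constructor
  · intro h ν hν
    have main : ∀ t : ℂ, (A - t • 1).det = 0 → t.im = 0 ∧ -1 ≤ t.re := by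
      intro t ht
      obtain ⟨v, hv0, hv⟩ := (Matrix.exists_mulVec_eq_zero_iff).mpr ht
      have hAv : A *ᵥ v = t • v := by
        have := hv
        rwa [Matrix.sub_mulVec, sub_eq_zero, Matrix.smul_mulVec, Matrix.one_mulVec] at this
      have hd := Matrix.dotProduct_star_self_pos_iff.mpr hv0
      set d : ℂ := dotProduct (star v) v with hddef
      have h2 := h.dotProduct_mulVec_nonneg v
      have h3 : dotProduct (star v) ((1 + A) *ᵥ v) = (1 + t) * d := by
        rw [Matrix.add_mulVec, Matrix.one_mulVec, hAv, dotProduct_add, dotProduct_smul]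
        simp [smul_eq_mul]; ring
      rw [h3] at h2
      rw [Complex.lt_def] at hd
      have hdre : 0 < d.re := by simpa using hd.1
      have hdim : d.im = 0 := by simpa using hd.2.symm
      rw [Complex.le_def] at h2
      have him : ((1 + t) * d).im = 0 := by simpa using h2.2.symm
      have hre : 0 ≤ ((1 + t) * d).re := by simpa using h2.1
      rw [Complex.mul_im, hdim, mul_zero, zero_add] at him
      have htim : t.im = 0 := by
        have : (1 + t).im = 0 := by
          rcases mul_eq_zero.mp him with h | h
          · exact h
          · exact absurd h hdre.ne'
        simpa using this
      rw [Complex.mul_re, hdim, mul_zero, sub_zero] at hre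
      rw [mul_comm] at hre
      have : 0 ≤ (1 + t).re := nonneg_of_mul_nonneg_right hre hdre
      constructor
      · exact htim
      · have : 0 ≤ 1 + t.re := by simpa using this
        linarith
    obtain ⟨him, hre⟩ := main ν hν
    obtain ⟨_, hre'⟩ := main (-ν) (pair ν hν)
    have hre'' : ν.re ≤ 1 := by
      simp only [Complex.neg_re] at hre'; linarith
    have : ν = (ν.re : ℂ) := Complex.ext rfl (by simpa using him)
    rw [this, Complex.norm_real, Real.norm_eq_abs]
    exact abs_le.mpr ⟨hre, hre''⟩
  · intro h
    have hle : ∀ i, 0 ≤ 1 + hA.eigenvalues i := by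
      intro i
      have h0 := h _ (herm_eigen_det_zero hA i)
      rw [Complex.norm_real, Real.norm_eq_abs] at h0
      linarith [(abs_le.mp h0).1]
    set U : Matrix ι ι ℂ := (hA.eigenvectorUnitary : Matrix ι ι ℂ) with hUdef
    have hU : U * star U = 1 := (Matrix.mem_unitaryGroup_iff).mp hA.eigenvectorUnitary.2
    set D : Matrix ι ι ℂ := diagonal (RCLike.ofReal ∘ hA.eigenvalues) with hDdef
    have h1 : U * (1 + D) * star U = 1 + A := by
      rw [Matrix.mul_add, Matrix.add_mul, mul_one, hU]
      conv_rhs => rw [hA.spectral_theorem]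
      rfl
    have hDpos : (1 + D).PosSemidef := by
      rw [hDdef, ← diagonal_one, diagonal_add]
      refine Matrix.PosSemidef.diagonal fun i => ?_
      simp only [Pi.add_apply, Pi.one_apply, Function.comp_apply, Pi.zero_apply]
      have : ((1 : ℂ) + RCLike.ofReal (hA.eigenvalues i)) = ((1 + hA.eigenvalues i : ℝ) : ℂ) := by
        push_cast; rfl
      rw [this]
      exact Complex.zero_le_real.mpr (hle i)
    rw [← h1]
    exact hDpos.mul_mul_conjTranspose_same U

lemma mapC_mul (M N : Matrix ι ι ℝ) :
    (M * N).map Complex.ofReal = M.map Complex.ofReal * N.map Complex.ofReal := by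
  ext i j; simp [Matrix.mul_apply, Matrix.map_apply]

lemma mapC_one : (1 : Matrix ι ι ℝ).map Complex.ofReal = 1 :=
  Matrix.map_one _ Complex.ofReal_zero Complex.ofReal_one


end Aux

set_option maxHeartbeats 1000000 in
/-- For a real symmetric positive definite `2n×2n` matrix `Σ`, `hbar > 0`,
and `M = (hbar/2)Σ⁻¹`, the quantum condition `Σ + (i·hbar/2)J_n ≥ 0` holds if and only if
every complex eigenvalue of `J_n·M` has modulus `≤ 1`. -/
theorem statement1 (n : ℕ) (hbar : ℝ) (hhb : 0 < hbar)
    (Sig : Matrix (PS n) (PS n) ℝ) (hsym : Sig.IsSymm) (hpos : Sig.PosDef) :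
    QuantumCond n hbar Sig ↔
      ∀ μ : ℂ, IsEigenvalue (symplJ n * ((hbar / 2) • Sig⁻¹)) μ → ‖μ‖ ≤ 1 := by
  classical
  set c : ℝ := hbar / 2 with hc
  have hc0 : (0:ℝ) < c := by positivity
  have hps := hpos.posSemidef
  obtain ⟨T₀, hT₀h, hT₀sq⟩ : ∃ T₀ : Matrix (PS n) (PS n) ℝ, T₀.IsHermitian ∧ T₀ * T₀ = Sig := by
    open scoped MatrixOrder in
    exact ⟨CFC.sqrt Sig, (CFC.sqrt_nonneg Sig).posSemidef.1, CFC.sqrt_mul_sqrt_self Sig hps.nonneg⟩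
  have hdetSig : Sig.det ≠ 0 := hpos.det_pos.ne'
  have hdetT₀ : T₀.det ≠ 0 := by
    intro h0; apply hdetSig; rw [← hT₀sq, det_mul, h0, zero_mul]
  set Sc : Matrix (PS n) (PS n) ℂ := Sig.map Complex.ofReal with hSc
  set Jc : Matrix (PS n) (PS n) ℂ := (symplJ n).map Complex.ofReal with hJc
  set T : Matrix (PS n) (PS n) ℂ := T₀.map Complex.ofReal with hT
  have hTsq : T * T = Sc := by rw [hT, hSc, ← mapC_mul, hT₀sq]
  have hdetT : T.det ≠ 0 := by
    rw [hT]
    have : (T₀.map Complex.ofReal).det = (T₀.det : ℂ) := by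
      rw [show (Complex.ofReal : ℝ → ℂ) = ⇑Complex.ofRealHom from rfl,
        ← RingHom.mapMatrix_apply, ← RingHom.map_det]
    rw [this]; exact_mod_cast hdetT₀
  have hTunit : IsUnit T.det := isUnit_iff_ne_zero.mpr hdetT
  set R : Matrix (PS n) (PS n) ℂ := T⁻¹ with hR
  have hRT : R * T = 1 := nonsing_inv_mul T hTunit
  have hTR : T * R = 1 := mul_nonsing_inv T hTunit
  have hTH : Tᴴ = T := by
    ext i j
    simp only [conjTranspose_apply, hT, Matrix.map_apply, Complex.star_def, Complex.conj_ofReal]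
    congr 1
    exact congrFun (congrFun hT₀h.symm j) i ▸ rfl
  have hTt : Tᵀ = T := by
    ext i j
    simp only [transpose_apply, hT, Matrix.map_apply]
    congr 1
    exact congrFun (congrFun hT₀h.symm j) i ▸ rfl
  have hRH : Rᴴ = R := by rw [hR, conjTranspose_nonsing_inv, hTH]
  have hRt : Rᵀ = R := by rw [hR, transpose_nonsing_inv, hTt]
  have hJt₀ : (symplJ n)ᵀ = -(symplJ n) := by
    simp [symplJ, fromBlocks_transpose, fromBlocks_neg]
  have hJt : Jcᵀ = -Jc := by
    ext i j
    simp only [transpose_apply, hJc, Matrix.map_apply, Matrix.neg_apply]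
    rw [show symplJ n j i = (symplJ n)ᵀ i j from rfl, hJt₀]; simp
  have hJH : Jcᴴ = -Jc := by
    ext i j
    simp only [conjTranspose_apply, hJc, Matrix.map_apply, Complex.star_def, Complex.conj_ofReal,
      Matrix.neg_apply]
    rw [show symplJ n j i = (symplJ n)ᵀ i j from rfl, hJt₀]; simp
  set A : Matrix (PS n) (PS n) ℂ := ((c : ℂ) * Complex.I) • (R * Jc * R) with hA
  have hAH : A.IsHermitian := by
    show Aᴴ = A
    rw [hA, conjTranspose_smul, conjTranspose_mul, conjTranspose_mul, hRH, hJH]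
    simp only [Matrix.mul_neg, Matrix.neg_mul, smul_neg, star_mul', Complex.star_def,
      Complex.conj_I, Complex.conj_ofReal]
    rw [← Matrix.mul_assoc]
    simp [mul_comm]
  have hAt : Aᵀ = -A := by
    rw [hA, transpose_smul, transpose_mul, transpose_mul, hRt, hJt]
    simp only [Matrix.mul_neg, Matrix.neg_mul, smul_neg, ← Matrix.mul_assoc]
  -- quantum condition reformulation
  set X : Matrix (PS n) (PS n) ℂ := Sc + ((c : ℂ) * Complex.I) • Jc with hX
  have hXQ : Sig.map Complex.ofReal + (c : ℝ) • Complex.I • Jc = X := by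
    rw [hX, hSc]
    congr 1
    ext i j
    simp [Matrix.smul_apply, Complex.real_smul]
    ring
  have hRXR : R * X * R = 1 + A := by
    have h1 : R * Sc * R = 1 := by
      rw [← hTsq, show R * (T * T) * R = (R * T) * (T * R) by
        simp only [Matrix.mul_assoc], hRT, hTR, one_mul]
    rw [hX, Matrix.mul_add, Matrix.add_mul, Matrix.mul_smul, Matrix.smul_mul, h1, hA]
  have hQC : QuantumCond n hbar Sig ↔ (1 + A).PosSemidef := by
    unfold QuantumCond
    rw [← hJc, ← hc, hXQ]
    constructor
    · intro hX'
      have := hX'.mul_mul_conjTranspose_same R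
      rwa [hRH, hRXR] at this
    · intro h1A
      have := h1A.mul_mul_conjTranspose_same T
      rw [hTH, ← hRXR, show T * (R * X * R) * T = (T * R) * X * (R * T) by
        simp only [Matrix.mul_assoc], hTR, hRT, one_mul, Matrix.mul_one] at this
      exact this
  -- eigenvalue correspondence
  have hSigUnit : IsUnit Sig.det := isUnit_iff_ne_zero.mpr hdetSig
  have hinvmap : (Sig⁻¹).map Complex.ofReal = Sc⁻¹ := by
    have h1 : Sc * (Sig⁻¹).map Complex.ofReal = 1 := by
      rw [hSc, ← mapC_mul, Matrix.mul_nonsing_inv _ hSigUnit, mapC_one]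
    exact (inv_eq_right_inv h1).symm
  have hScinv : Sc⁻¹ = R * R := by rw [← hTsq, Matrix.mul_inv_rev, hR]
  have hmap : (symplJ n * (c • Sig⁻¹)).map Complex.ofReal = (c : ℂ) • (Jc * (R * R)) := by
    rw [mapC_mul, ← hJc]
    have hsm : (c • Sig⁻¹).map Complex.ofReal = (c : ℂ) • (R * R) := by
      rw [← hScinv, ← hinvmap]
      ext i j
      simp [Matrix.map_apply, Matrix.smul_apply, Complex.real_smul]
    rw [hsm, Matrix.mul_smul]
  have heig : ∀ μ : ℂ, IsEigenvalue (symplJ n * ((hbar / 2) • Sig⁻¹)) μ ↔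
      (A - (Complex.I * μ) • 1).det = 0 := by
    intro μ
    unfold IsEigenvalue
    rw [← hc, hmap]
    set B : Matrix (PS n) (PS n) ℂ := (c:ℂ) • (R * Jc * R) with hB
    have hsim : R * ((c:ℂ) • (Jc * (R * R)) - μ • 1) * T = B - μ • 1 := by
      simp only [Matrix.mul_sub, Matrix.sub_mul, Matrix.mul_smul, Matrix.smul_mul,
        Matrix.mul_one]
      rw [hRT, show R * (Jc * (R * R)) * T = R * Jc * (R * (R * T)) by
        simp only [Matrix.mul_assoc], hRT, Matrix.mul_one]
    have hdet1 : R.det * T.det = 1 := by rw [← det_mul, hRT, det_one]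
    have hdets : (B - μ • 1).det = ((c:ℂ) • (Jc * (R * R)) - μ • 1).det := by
      rw [← hsim, det_mul, det_mul]
      set Y := (c:ℂ) • (Jc * (R * R)) - μ • 1 with hY
      calc R.det * Y.det * T.det = Y.det * (R.det * T.det) := by ring
        _ = Y.det := by rw [hdet1, mul_one]
    have hIA : A - (Complex.I * μ) • 1 = Complex.I • (B - μ • 1) := by
      rw [smul_sub, hB, smul_smul, smul_smul, mul_comm Complex.I (c:ℂ), hA]
    rw [← hdets, hIA, det_smul]
    have hIpow : (Complex.I : ℂ) ^ Fintype.card (PS n) ≠ 0 := pow_ne_zero _ Complex.I_ne_zero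
    constructor
    · intro h0; rw [h0, mul_zero]
    · intro h0; exact (mul_eq_zero.mp h0).resolve_left hIpow
  rw [hQC, key_lemma hAH hAt]
  constructor
  · intro h μ hμ
    have h1 := h _ ((heig μ).mp hμ)
    rwa [norm_mul, Complex.norm_I, one_mul] at h1
  · intro h ν hν
    have hμ : IsEigenvalue (symplJ n * ((hbar / 2) • Sig⁻¹)) (-Complex.I * ν) := by
      rw [heig]
      have e : Complex.I * (-Complex.I * ν) = ν := by
        rw [← mul_assoc, mul_neg, Complex.I_mul_I, neg_neg, one_mul]
      rw [e]; exact hν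
    have h1 := h _ hμ
    have e2 : ‖-Complex.I * ν‖ = ‖ν‖ := by
      simp [_root_.map_mul]
    rwa [e2] at h1
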